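/- For every positive integer k there are infinitely many pairs of positive integers (p, q) with gcd(p, q) = k and p, q ≥ 2 such that (p + q) does not divide (pq + k²); equivalently, such that (pq + k²)/(2(p + q)) is not half of an integer. -/

import Mathlib

/-!
Write `p = k a`, `q = k b` with `a, b` coprime. Then `p + q ∣ pq + k²` iff `a + b ∣ k (ab + 1)`.
For `a = 2` and odd `b`, the identity `k (2b + 1) + 3k = 2k (b + 2)` turns this into `b + 2 ∣ 3k`,
which fails as soon as `b + 2 > 3k`.
-/

lemma mul_add_mul_dvd_mul_mul_add_sq_iff {k : ℕ} (hk : 0 < k) (a b : ℕ) :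
    k * a + k * b ∣ k * a * (k * b) + k ^ 2 ↔ a + b ∣ k * (a * b + 1) := by
  rw [← mul_add, show k * a * (k * b) + k ^ 2 = k * (k * (a * b + 1)) by ring]
  exact Nat.mul_dvd_mul_iff_left hk

lemma not_two_add_dvd_mul_two_mul_add_one {k b : ℕ} (hk : 0 < k) (hb : 3 * k < 2 + b) :
    ¬ 2 + b ∣ k * (2 * b + 1) := by
  intro h
  have h3k : 2 + b ∣ 3 * k := by
    rw [← Nat.dvd_add_left h, show 3 * k + k * (2 * b + 1) = 2 * k * (2 + b) by ring]
    exact Dvd.intro_left _ rfl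
  exact absurd (Nat.le_of_dvd (by omega) h3k) (by omega)

lemma gcd_two_mul_mul_of_odd (k : ℕ) {b : ℕ} (hb : Odd b) : Nat.gcd (2 * k) (b * k) = k := by
  rw [Nat.gcd_mul_right, Nat.coprime_two_left.mpr hb, one_mul]

lemma Nat.dvd_iff_exists_int_div_two_mul_eq_half {d m : ℕ} (hd : d ≠ 0) :
    d ∣ m ↔ ∃ n : ℤ, (m : ℚ) / (2 * d) = n / 2 := by
  have hd' : (d : ℚ) ≠ 0 := by exact_mod_cast hd
  constructor
  · rintro ⟨c, rfl⟩
    exact ⟨c, by push_cast; field_simp⟩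
  · rintro ⟨n, hn⟩
    rw [div_eq_div_iff (by positivity) two_ne_zero] at hn
    have hm : (m : ℤ) = d * n := by
      exact_mod_cast (show (m : ℚ) = d * n by linarith)
    exact Int.natCast_dvd_natCast.mp ⟨n, hm⟩

/-- For every positive integer `k` there are infinitely many pairs of positive
integers `(p, q)` with `gcd(p, q) = k` and `p, q ≥ 2` such that `(p + q)` does not
divide `(pq + k²)`; equivalently (for such pairs the two conditions coincide),
such that `(pq + k²)/(2(p + q))` is not half of an integer. -/
theorem stmt_7 (k : ℕ) (hk : 0 < k) :
    {pq : ℕ × ℕ | 2 ≤ pq.1 ∧ 2 ≤ pq.2 ∧ Nat.gcd pq.1 pq.2 = k ∧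
      ¬ (pq.1 + pq.2) ∣ (pq.1 * pq.2 + k ^ 2)}.Infinite ∧
    ∀ p q : ℕ, 2 ≤ p → 2 ≤ q →
      (¬ (p + q) ∣ (p * q + k ^ 2) ↔
        ¬ ∃ n : ℤ, ((p : ℚ) * q + (k : ℚ) ^ 2) / (2 * ((p : ℚ) + q)) = (n : ℚ) / 2) := by
  refine ⟨?_, fun p q hp _ => ?_⟩
  · refine Set.infinite_of_injective_forall_mem
      (f := fun n => (2 * k, (2 * n + 4 * k + 1) * k)) ?_ fun n => ?_
    · intro m n hmn
      have := Nat.eq_of_mul_eq_mul_right hk (Prod.mk.inj hmn).2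
      omega
    · have hdvd := mul_add_mul_dvd_mul_mul_add_sq_iff hk 2 (2 * n + 4 * k + 1)
      rw [mul_comm k 2, mul_comm k (2 * n + 4 * k + 1)] at hdvd
      refine ⟨by omega, by nlinarith, gcd_two_mul_mul_of_odd k ⟨n + 2 * k, by ring⟩, ?_⟩
      exact hdvd.not.mpr (not_two_add_dvd_mul_two_mul_add_one hk (by omega))
  · rw [Nat.dvd_iff_exists_int_div_two_mul_eq_half (by omega)]
    push_cast
    rfl
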